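/- arXiv:2412.14411 — 5 statements merged into one kernel-verified Lean document; each statement's English description precedes it below -/
import Mathlib

section
/- For all α, β > 0 and J ∈ ℝ, one has the two equivalent characterizations S(J|α,β) = √(αβ) · 𝒞(J/√(αβ)) − (J/2) log(α/β) + (√α − √β)² and S(J|α,β) = inf{ H(u|α) + H(w|β) : u, w ≥ 0, J = u − w }. In particular S(J|α,β) ≥ −(J/2) log(α/β) + (√α − √β)². -/
open MeasureTheory Filter Set
open scoped ENNReal Topology BigOperators

noncomputable section

namespace FSCRN

/-- Euclidean dot product on `Fin n → ℝ`. -/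
def dot {n : ℕ} (a b : Fin n → ℝ) : ℝ := ∑ i, a i * b i

/-- `S*_{α,β}(p) = α(e^p − 1) + β(e^(−p) − 1)`. -/
def Sstar (α β p : ℝ) : ℝ := α * (Real.exp p - 1) + β * (Real.exp (-p) - 1)

/-- `S(J|α,β)`: the Legendre transform of `p ↦ S*_{α,β}(p)`, valued in `[0,∞]`
(it is nonnegative since the supremand vanishes at `p = 0`). -/
def Sfun (J α β : ℝ) : ℝ≥0∞ := ⨆ p : ℝ, ENNReal.ofReal (p * J - Sstar α β p)

/-- `S(J|α,β)` as an extended-real-valued Legendre transform. -/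
def SE (J α β : ℝ) : EReal := ⨆ p : ℝ, ((p * J - Sstar α β p : ℝ) : EReal)

/-- The Legendre transform `𝒞` of `𝒞*(p) = 2(cosh p − 1)` (finite, real-valued). -/
def coshLeg (v : ℝ) : ℝ := ⨆ p : ℝ, (p * v - 2 * (Real.cosh p - 1))

/-- Scalar relative entropy `H(u|a) = u log(u/a) − u + a`. -/
def entS (u a : ℝ) : ℝ := u * Real.log (u / a) - u + a

/-- Vector relative entropy `𝓗(x|y) = Σᵢ (xᵢ log(xᵢ/yᵢ) − xᵢ + yᵢ)`. -/
def relEnt {n : ℕ} (x y : Fin n → ℝ) : ℝ := ∑ i, (x i * Real.log (x i / y i) - x i + y i)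

/-- Extended-real logarithm of a nonnegative real, with `elog 0 = ⊥`. -/
def elog (a : ℝ) : EReal := if a = 0 then ⊥ else ((Real.log a : ℝ) : EReal)

/-- The nonnegative orthant `𝖢 = ℝ^I_{≥0}`. -/
def nonnegOrthant (I : ℕ) : Set (Fin I → ℝ) := {x | ∀ i, 0 ≤ x i}

/-- `g` is an integrable (a.e.) derivative of the curve `x` on `[0,T]`; this encodes
absolute continuity of `x` on `[0,T]` together with `x' = g`. -/
def IsACderiv {n : ℕ} (T : ℝ) (x g : ℝ → Fin n → ℝ) : Prop :=
  IntegrableOn g (Set.Icc 0 T) volume ∧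
    ∀ t ∈ Set.Icc 0 T, x t = x 0 + ∫ s in Set.Icc 0 t, g s

/-- Weak `L¹([0,T])` convergence (testing against `L^∞` functions) of a family indexed
by `ε → 0⁺`. -/
def WeakL1TendstoOn {n : ℕ} (T : ℝ) (xe : ℝ → ℝ → Fin n → ℝ) (x : ℝ → Fin n → ℝ) : Prop :=
  ∀ φ : ℝ → Fin n → ℝ, MemLp φ ⊤ (volume.restrict (Set.Icc 0 T)) →
    Tendsto (fun ε => ∫ t in Set.Icc 0 T, dot (φ t) (xe ε t)) (𝓝[>] (0:ℝ))
      (𝓝 (∫ t in Set.Icc 0 T, dot (φ t) (x t)))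

/-- Strong `L¹([0,T])` convergence as `ε → 0⁺`. -/
def L1TendstoOn {n : ℕ} (T : ℝ) (xe : ℝ → ℝ → Fin n → ℝ) (x : ℝ → Fin n → ℝ) : Prop :=
  Tendsto (fun ε => ∫⁻ t in Set.Icc 0 T, ENNReal.ofReal ‖xe ε t - x t‖) (𝓝[>] (0:ℝ)) (𝓝 0)

/-- Strong `L^p([0,T])` convergence as `ε → 0⁺`. -/
def LpTendstoOn {n : ℕ} (T p : ℝ) (xe : ℝ → ℝ → Fin n → ℝ) (x : ℝ → Fin n → ℝ) : Prop :=
  Tendsto (fun ε => ∫⁻ t in Set.Icc 0 T, ENNReal.ofReal (‖xe ε t - x t‖ ^ p)) (𝓝[>] (0:ℝ)) (𝓝 0)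

/-- Uniform (essential) `L^∞` bound for the family `xe`. -/
def UnifBddOn {n : ℕ} (T : ℝ) (xe : ℝ → ℝ → Fin n → ℝ) (C : ℝ) : Prop :=
  ∀ ε ∈ Set.Ioi (0:ℝ), ∀ᵐ t ∂(volume.restrict (Set.Icc 0 T)), ‖xe ε t‖ ≤ C

/-- spatial gradient of a test function `φ(x,t)` -/
def spaceGrad {n : ℕ} (φ : (Fin n → ℝ) × ℝ → ℝ) (z : (Fin n → ℝ) × ℝ) : Fin n → ℝ :=
  fun i => fderiv ℝ φ z (Pi.single i 1, 0)

/-- time derivative of a test function `φ(x,t)` -/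
def timeDeriv {n : ℕ} (φ : (Fin n → ℝ) × ℝ → ℝ) (z : (Fin n → ℝ) × ℝ) : ℝ :=
  fderiv ℝ φ z (0, 1)

/-- viscosity subsolution of `∂ₜ u + H(x,∇u) ≤ 0`: test points in `Dtest`,
maxima of `u − φ` over `Dmax`. -/
def IsViscSubsol {n : ℕ} (H : (Fin n → ℝ) → (Fin n → ℝ) → ℝ)
    (Dtest Dmax : Set ((Fin n → ℝ) × ℝ)) (u : (Fin n → ℝ) × ℝ → ℝ) : Prop :=
  ∀ φ : (Fin n → ℝ) × ℝ → ℝ, ContDiff ℝ 1 φ → ∀ z ∈ Dtest,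
    IsMaxOn (fun w => u w - φ w) Dmax z → timeDeriv φ z + H z.1 (spaceGrad φ z) ≤ 0

/-- viscosity supersolution of `∂ₜ u + H(x,∇u) ≥ 0`. -/
def IsViscSupersol {n : ℕ} (H : (Fin n → ℝ) → (Fin n → ℝ) → ℝ)
    (Dtest Dmax : Set ((Fin n → ℝ) × ℝ)) (u : (Fin n → ℝ) × ℝ → ℝ) : Prop :=
  ∀ φ : (Fin n → ℝ) × ℝ → ℝ, ContDiff ℝ 1 φ → ∀ z ∈ Dtest,
    IsMinOn (fun w => u w - φ w) Dmax z → 0 ≤ timeDeriv φ z + H z.1 (spaceGrad φ z)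

/-- bounded and uniformly continuous on a set -/
def BUCOn {α : Type*} [UniformSpace α] (u : α → ℝ) (s : Set α) : Prop :=
  UniformContinuousOn u s ∧ ∃ M, ∀ z ∈ s, |u z| ≤ M

/-- A fast-slow chemical reaction network: slow/fast reactions `Rslow`, `Rfast`,
stoichiometric coefficients `γp = γ⁺`, `γm = γ⁻`, and rate constants `kp = k⁺`, `km = k⁻`. -/
structure Network (I : ℕ) (R : Type*) where
  Rslow : Finset R
  Rfast : Finset R
  γp : R → Fin I → ℕ
  γm : R → Fin I → ℕ
  kp : R → ℝ
  km : R → ℝ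

namespace Network

variable {I : ℕ} {R : Type*} [DecidableEq R] {m : ℕ}

/-- all reactions `𝓡 = 𝓡_slow ∪ 𝓡_fast` -/
def Rall (N : Network I R) : Finset R := N.Rslow ∪ N.Rfast

/-- reaction vector `γ_r = γ_r⁻ − γ_r⁺` -/
def gam (N : Network I R) (r : R) : Fin I → ℝ := fun i => (N.γm r i : ℝ) - (N.γp r i : ℝ)

/-- forward mass-action intensity `Ψ_r⁺(x) = k_r⁺ ∏ᵢ xᵢ^(γ_{ri}⁺)` -/
def Psip (N : Network I R) (r : R) (x : Fin I → ℝ) : ℝ := N.kp r * ∏ i, x i ^ N.γp r i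

/-- backward mass-action intensity `Ψ_r⁻(x) = k_r⁻ ∏ᵢ xᵢ^(γ_{ri}⁻)` -/
def Psim (N : Network I R) (r : R) (x : Fin I → ℝ) : ℝ := N.km r * ∏ i, x i ^ N.γm r i

/-- positivity of all rate constants -/
def posRates (N : Network I R) : Prop := ∀ r ∈ N.Rall, 0 < N.kp r ∧ 0 < N.km r

/-- stoichiometric subspace `Γ = span{γ_r : r ∈ 𝓡}` -/
def Gamma (N : Network I R) : Submodule ℝ (Fin I → ℝ) := Submodule.span ℝ (N.gam '' ↑N.Rall)

/-- fast stoichiometric subspace `Γ_fast` -/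
def GammaFast (N : Network I R) : Submodule ℝ (Fin I → ℝ) :=
  Submodule.span ℝ (N.gam '' ↑N.Rfast)

/-- orthogonal complement `Γ_fast^⊥` -/
def GammaFastPerp (N : Network I R) : Set (Fin I → ℝ) :=
  {p | ∀ r ∈ N.Rfast, dot (N.gam r) p = 0}

/-- set of fast equilibria `𝓔_fast ⊆ 𝖢` -/
def Efast (N : Network I R) : Set (Fin I → ℝ) :=
  {x | (∀ i, 0 ≤ x i) ∧ ∀ r ∈ N.Rfast, N.Psip r x = N.Psim r x}

/-- the rows of `Qf` form a basis of `Γ_fast^⊥` -/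
def IsQfast (N : Network I R) (Qf : Matrix (Fin m) (Fin I) ℝ) : Prop :=
  LinearIndependent ℝ (fun j => Qf j) ∧
    (Submodule.span ℝ (Set.range fun j => Qf j) : Set (Fin I → ℝ)) = N.GammaFastPerp

/-- fast detailed balance condition (FDB) -/
def FDB (N : Network I R) : Prop :=
  ∃ xs : Fin I → ℝ, (∀ i, 0 < xs i) ∧ ∀ r ∈ N.Rfast, N.Psip r xs = N.Psim r xs

/-- unique fast equilibrium condition (UFE), with reconstruction map `RR = 𝖱`. -/
def IsRecon (N : Network I R) (Qf : Matrix (Fin m) (Fin I) ℝ)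
    (RR : (Fin m → ℝ) → Fin I → ℝ) : Prop :=
  ∀ q ∈ Qf.mulVec '' nonnegOrthant I,
    RR q ∈ N.Efast ∧ Qf.mulVec (RR q) = q ∧ ∀ y ∈ N.Efast, Qf.mulVec y = q → y = RR q

/-- positivity assumption on the reconstruction map `𝖱` -/
def ReconPos (Qf : Matrix (Fin m) (Fin I) ℝ) (RR : (Fin m → ℝ) → Fin I → ℝ) : Prop :=
  ∃ qbar ∈ Qf.mulVec '' nonnegOrthant I, ∀ θ : ℝ, 0 < θ → θ ≤ 1 →
    ∀ q ∈ Qf.mulVec '' nonnegOrthant I, ∀ i,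
      0 < RR (q + θ • qbar) i ∧ RR q i ≤ RR (q + θ • qbar) i

/-- fast-slow Hamiltonian `H_ε` -/
def Heps (N : Network I R) (ε : ℝ) (x p : Fin I → ℝ) : ℝ :=
  (∑ r ∈ N.Rslow, Sstar (N.Psip r x) (N.Psim r x) (dot (N.gam r) p))
    + ε⁻¹ * ∑ r ∈ N.Rfast, Sstar (N.Psip r x) (N.Psim r x) (dot (N.gam r) p)

/-- fast-slow Lagrangian `L_ε` -/
def Leps (N : Network I R) (ε : ℝ) (x v : Fin I → ℝ) : ℝ≥0∞ :=
  ⨅ J : {J : R → ℝ // v = fun i => ∑ r ∈ N.Rall, J r * N.gam r i},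
    (∑ r ∈ N.Rslow, Sfun (J.1 r) (N.Psip r x) (N.Psim r x))
      + ∑ r ∈ N.Rfast, Sfun (J.1 r) (ε⁻¹ * N.Psip r x) (ε⁻¹ * N.Psim r x)

/-- effective Lagrangian as a function of the coarse-grained velocity `Q_fast v`. -/
def LeffQ (N : Network I R) (Qf : Matrix (Fin m) (Fin I) ℝ)
    (x : Fin I → ℝ) (qv : Fin m → ℝ) : ℝ≥0∞ :=
  ⨅ J : {J : R → ℝ // qv = ∑ r ∈ N.Rslow, J r • Qf.mulVec (N.gam r)},
    ∑ r ∈ N.Rslow, Sfun (J.1 r) (N.Psip r x) (N.Psim r x)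

open Classical in
/-- effective Lagrangian `L_eff(x,v)` (`= +∞` off `𝓔_fast`). -/
def Leff (N : Network I R) (Qf : Matrix (Fin m) (Fin I) ℝ) (x v : Fin I → ℝ) : ℝ≥0∞ :=
  if x ∈ N.Efast then N.LeffQ Qf x (Qf.mulVec v) else ⊤

open Classical in
/-- effective Hamiltonian `H_eff(x,p)` (`= +∞` off `Γ_fast^⊥`). -/
def Heff (N : Network I R) (x p : Fin I → ℝ) : EReal :=
  if p ∈ N.GammaFastPerp then
    (((∑ r ∈ N.Rslow, Sstar (N.Psip r x) (N.Psim r x) (dot (N.gam r) p)) : ℝ) : EReal)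
  else ⊤

/-- tangent space `T_x 𝓔_fast = diag(x) Γ_fast^⊥` -/
def tangentEfast (N : Network I R) (x : Fin I → ℝ) : Set (Fin I → ℝ) :=
  {v | ∃ w ∈ N.GammaFastPerp, v = fun i => x i * w i}

/-- the action `∫₀ᵀ L_ε(x(t), x'(t)) dt` for an absolutely continuous curve `x`
(`+∞` if `x` is not absolutely continuous on `[0,T]`). -/
def rawActionEps (N : Network I R) (ε T : ℝ) (x : ℝ → Fin I → ℝ) : ℝ≥0∞ :=
  ⨅ g : {g : ℝ → Fin I → ℝ // IsACderiv T x g},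
    ∫⁻ t in Set.Icc 0 T, N.Leps ε (x t) (g.1 t)

open Classical in
/-- the fast-slow action functional `𝓛_ε` with terminal point `xT`. -/
def ActionEps (N : Network I R) (ε T : ℝ) (xT : Fin I → ℝ) (x : ℝ → Fin I → ℝ) : ℝ≥0∞ :=
  if (∀ t ∈ Set.Icc 0 T, ∀ i, 0 ≤ x t i) ∧ x T = xT then N.rawActionEps ε T x else ⊤

open Classical in
/-- `∫₀ᵀ L_eff(x(t), x'(t)) dt`, finite only if `x(t) ∈ 𝓔_fast` on `[0,T]` and
`Q_fast x ∈ W^{1,1}([0,T])`. -/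
def rawActionEff (N : Network I R) (Qf : Matrix (Fin m) (Fin I) ℝ)
    (T : ℝ) (x : ℝ → Fin I → ℝ) : ℝ≥0∞ :=
  if ∀ t ∈ Set.Icc 0 T, x t ∈ N.Efast then
    ⨅ w : {w : ℝ → Fin m → ℝ //
        IntegrableOn w (Set.Icc 0 T) volume ∧
          ∀ t ∈ Set.Icc 0 T, Qf.mulVec (x t) = Qf.mulVec (x 0) + ∫ s in Set.Icc 0 t, w s},
      ∫⁻ t in Set.Icc 0 T, N.LeffQ Qf (x t) (w.1 t)
  else ⊤

open Classical in
/-- the effective action functional `𝓛_eff`. -/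
def ActionEff (N : Network I R) (Qf : Matrix (Fin m) (Fin I) ℝ)
    (T : ℝ) (x : ℝ → Fin I → ℝ) : ℝ≥0∞ :=
  if ContinuousOn x (Set.Icc 0 T) then N.rawActionEff Qf T x else ⊤

/-- the variational representation value
`inf { u0(x(0)) + ∫₀ᵗ L_ε(x,x') : x ∈ AC([0,t],A), x(t) = x }`. -/
def epsVal (N : Network I R) (ε : ℝ) (u0 : (Fin I → ℝ) → ℝ) (A : Set (Fin I → ℝ))
    (t : ℝ) (x : Fin I → ℝ) : EReal :=
  ⨅ xc : {xc : ℝ → Fin I → ℝ //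
      xc t = x ∧ (∀ s ∈ Set.Icc 0 t, xc s ∈ A) ∧ ∃ g, IsACderiv t xc g},
    ((u0 (xc.1 0) : ℝ) : EReal) + (N.rawActionEps ε t xc.1).toEReal

/-- the effective variational representation value
`inf { u0*(x(0)) + ∫₀ᵗ L_eff(x,x') : x ∈ AC([0,t],A), x(t) = x }`. -/
def effVal (N : Network I R) (Qf : Matrix (Fin m) (Fin I) ℝ) (u0 : (Fin I → ℝ) → ℝ)
    (A : Set (Fin I → ℝ)) (t : ℝ) (x : Fin I → ℝ) : EReal :=
  ⨅ xc : {xc : ℝ → Fin I → ℝ //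
      xc t = x ∧ (∀ s ∈ Set.Icc 0 t, xc s ∈ A) ∧ ∃ g, IsACderiv t xc g},
    ((u0 (xc.1 0) : ℝ) : EReal) + (N.rawActionEff Qf t xc.1).toEReal

/-- `H_eff(x, ·)` applied to an (ambient) differential `ℓ`, defined intrinsically on the
slow manifold as the Legendre transform of `L_eff(x,·)` over the tangent space `T_x 𝓔_fast`. -/
def HeffM (N : Network I R) (Qf : Matrix (Fin m) (Fin I) ℝ)
    (x : Fin I → ℝ) (ℓ : (Fin I → ℝ) → ℝ) : EReal :=
  ⨆ v ∈ N.tangentEfast x, (((ℓ v : ℝ) : EReal) - (N.LeffQ Qf x (Qf.mulVec v)).toEReal)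

/-- viscosity subsolution of `∂ₜ u + H_eff(x, dₓu) ≤ 0` on the slow manifold. -/
def IsViscSubsolM (N : Network I R) (Qf : Matrix (Fin m) (Fin I) ℝ)
    (Dtest Dmax : Set ((Fin I → ℝ) × ℝ)) (u : (Fin I → ℝ) × ℝ → ℝ) : Prop :=
  ∀ φ : (Fin I → ℝ) × ℝ → ℝ, ContDiff ℝ 1 φ → ∀ z ∈ Dtest,
    IsMaxOn (fun w => u w - φ w) Dmax z →
      ((timeDeriv φ z : ℝ) : EReal) + N.HeffM Qf z.1 (fun v => fderiv ℝ φ z (v, 0)) ≤ 0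

/-- viscosity supersolution of `∂ₜ u + H_eff(x, dₓu) ≥ 0` on the slow manifold. -/
def IsViscSupersolM (N : Network I R) (Qf : Matrix (Fin m) (Fin I) ℝ)
    (Dtest Dmax : Set ((Fin I → ℝ) × ℝ)) (u : (Fin I → ℝ) × ℝ → ℝ) : Prop :=
  ∀ φ : (Fin I → ℝ) × ℝ → ℝ, ContDiff ℝ 1 φ → ∀ z ∈ Dtest,
    IsMinOn (fun w => u w - φ w) Dmax z →
      (0 : EReal) ≤ ((timeDeriv φ z : ℝ) : EReal)
        + N.HeffM Qf z.1 (fun v => fderiv ℝ φ z (v, 0))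

/-- the coarse-grained Hamiltonian `𝖧(q, p̂)`. -/
def HCG (N : Network I R) (Qf : Matrix (Fin m) (Fin I) ℝ)
    (RR : (Fin m → ℝ) → Fin I → ℝ) (q ph : Fin m → ℝ) : ℝ :=
  ∑ r ∈ N.Rslow, Sstar (N.Psip r (RR q)) (N.Psim r (RR q)) (dot (Qf.mulVec (N.gam r)) ph)

/-- well-prepared initial data `(u₀^ε)` with limit `u₀^*`. -/
def WellPrepared (N : Network I R) (Ω : Set (Fin I → ℝ)) (C : ℝ)
    (u0 : ℝ → (Fin I → ℝ) → ℝ) (u0star : (Fin I → ℝ) → ℝ) : Prop :=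
  (∀ ε ∈ Set.Ioi (0:ℝ), BUCOn (u0 ε) Ω
    ∧ (∀ x ∈ closure Ω, DifferentiableAt ℝ (u0 ε) x ∧ |u0 ε x| ≤ C ∧ ‖fderiv ℝ (u0 ε) x‖ ≤ C)
    ∧ ContinuousOn (fun x => fderiv ℝ (u0 ε) x) (closure Ω)
    ∧ ∀ r ∈ N.Rfast, ∀ x ∈ closure Ω,
        dot (N.gam r) (fun i => fderiv ℝ (u0 ε) x (Pi.single i 1)) = 0)
  ∧ (∀ x ∈ closure Ω, DifferentiableAt ℝ u0star x)
  ∧ ContinuousOn u0star (closure Ω)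
  ∧ ContinuousOn (fun x => fderiv ℝ u0star x) (closure Ω)
  ∧ TendstoUniformlyOn u0 u0star (𝓝[>] (0:ℝ)) (closure Ω)

/-- the uniform Lipschitz estimate `|∂ₜ u| + |γ_r · ∇u| ≤ CL` (at points of
differentiability). -/
def LipBound (N : Network I R) (D : Set ((Fin I → ℝ) × ℝ)) (CL : ℝ)
    (u : (Fin I → ℝ) × ℝ → ℝ) : Prop :=
  ∀ z ∈ D, DifferentiableAt ℝ u z →
    ∀ r ∈ N.Rall, |timeDeriv u z| + |dot (N.gam r) (spaceGrad u z)| ≤ CL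

end Network

end FSCRN

namespace FSCRN
namespace Network

variable {I : ℕ} {R : Type*} [DecidableEq R]

/-- a bounded-uniformly-continuous viscosity solution of the state-constrained
fast-slow HJE on `Ω × (0,T)` with initial datum `u0ε`, which is Lipschitz in time and
Lipschitz in space along the stoichiometric directions `Γ`. -/
def IsLipschitzViscSol (N : Network I R) (Ω : Set (Fin I → ℝ)) (T ε : ℝ)
    (u0ε : (Fin I → ℝ) → ℝ) (u : (Fin I → ℝ) × ℝ → ℝ) : Prop :=
  BUCOn u (closure Ω ×ˢ Set.Icc 0 T) ∧
  IsViscSubsol (N.Heps ε) (Ω ×ˢ Set.Ioo 0 T) (Ω ×ˢ Set.Ioo 0 T) u ∧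
  IsViscSupersol (N.Heps ε) (closure Ω ×ˢ Set.Ioo 0 T) (closure Ω ×ˢ Set.Ioo 0 T) u ∧
  (∀ x ∈ closure Ω, u (x, 0) = u0ε x) ∧
  (∃ K : ℝ, (∀ x ∈ Ω, ∀ s ∈ Set.Icc 0 T, ∀ t ∈ Set.Icc 0 T,
      |u (x, t) - u (x, s)| ≤ K * |t - s|) ∧
    ∀ t ∈ Set.Icc 0 T, ∀ x ∈ Ω, ∀ y ∈ Ω, x - y ∈ N.Gamma →
      |u (x, t) - u (y, t)| ≤ K * ‖x - y‖)

end Network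

end FSCRN

open FSCRN FSCRN.Network

private lemma entS_legendre {a u p : ℝ} (ha : 0 < a) (hu : 0 ≤ u) :
    p * u - a * (Real.exp p - 1) ≤ entS u a := by
  rcases hu.eq_or_lt with h | h
  · subst h
    simp only [entS, mul_zero, zero_mul, sub_zero, zero_sub, zero_add]
    nlinarith [mul_pos ha (Real.exp_pos p)]
  · have hl : Real.exp (Real.log (u / a)) = u / a := Real.exp_log (div_pos h ha)
    have e1 : (1 : ℝ) + (p - Real.log (u / a)) ≤ Real.exp (p - Real.log (u / a)) := by
      linarith [Real.add_one_le_exp (p - Real.log (u / a))]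
    have h2 : u * Real.exp (p - Real.log (u / a)) = a * Real.exp p := by
      rw [Real.exp_sub, hl]
      field_simp
    have h3 : u * (1 + (p - Real.log (u / a))) ≤ a * Real.exp p := by
      rw [← h2]
      exact mul_le_mul_of_nonneg_left e1 hu
    simp only [entS]
    nlinarith [h3]

set_option maxHeartbeats 1000000 in
/-- Proposition `prop:PropertiesS` (2): for `α, β > 0`,
`S(J|α,β) = √(αβ)·𝒞(J/√(αβ)) − (J/2) log(α/β) + (√α − √β)²`, it equals
`inf { H(u|α) + H(w|β) : u,w ≥ 0, J = u − w }`, and in particular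
`S(J|α,β) ≥ −(J/2) log(α/β) + (√α − √β)²`. -/
theorem Sfun_characterizations (α β : ℝ) (hα : 0 < α) (hβ : 0 < β) (J : ℝ) :
    SE J α β
      = ((Real.sqrt (α * β) * coshLeg (J / Real.sqrt (α * β))
          - J / 2 * Real.log (α / β) + (Real.sqrt α - Real.sqrt β) ^ 2 : ℝ) : EReal)
    ∧ SE J α β
      = ⨅ uw : {q : ℝ × ℝ // 0 ≤ q.1 ∧ 0 ≤ q.2 ∧ J = q.1 - q.2},
          ((entS uw.1.1 α + entS uw.1.2 β : ℝ) : EReal)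
    ∧ ((-(J / 2) * Real.log (α / β) + (Real.sqrt α - Real.sqrt β) ^ 2 : ℝ) : EReal)
        ≤ SE J α β := by
  set s := Real.sqrt (α * β) with hs_def
  have hs : 0 < s := Real.sqrt_pos.2 (mul_pos hα hβ)
  set v := J / s with hv_def
  set c := Real.log (α / β) / 2 with hc_def
  set D := Real.sqrt (J ^ 2 + 4 * α * β) with hD_def
  have hD2 : D ^ 2 = J ^ 2 + 4 * α * β := Real.sq_sqrt (by positivity)
  have hDJ : |J| < D := by
    have h1 : |J| = Real.sqrt (J ^ 2) := (Real.sqrt_sq_eq_abs J).symm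
    rw [h1, hD_def]
    exact Real.sqrt_lt_sqrt (by positivity) (by nlinarith)
  have habs := abs_lt.1 hDJ
  set u := (J + D) / 2 with hu_def
  set w := (D - J) / 2 with hw_def
  have hu : 0 < u := by rw [hu_def]; linarith [habs.1]
  have hw : 0 < w := by rw [hw_def]; linarith [habs.2]
  have huw : u - w = J := by rw [hu_def, hw_def]; ring
  have huw2 : u * w = α * β := by
    have h1 : u * w = (D ^ 2 - J ^ 2) / 4 := by rw [hu_def, hw_def]; ring
    rw [h1, hD2]; ring
  set P := Real.log (u / α) with hP_def
  have hePu : α * Real.exp P = u := by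
    rw [hP_def, Real.exp_log (div_pos hu hα)]
    field_simp
  have hePw : β * Real.exp (-P) = w := by
    have h1 : Real.exp (-P) = (Real.exp P)⁻¹ := Real.exp_neg P
    have h2 : Real.exp P = u / α := by rw [hP_def]; exact Real.exp_log (div_pos hu hα)
    rw [h1, h2]
    field_simp
    nlinarith [huw2]
  -- the supremum defining SE is attained at P
  have hmax : ∀ p : ℝ, p * J - Sstar α β p ≤ P * J - Sstar α β P := by
    intro p
    have e1 : (1 : ℝ) + (p - P) ≤ Real.exp (p - P) := by
      linarith [Real.add_one_le_exp (p - P)]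
    have e1' : (1 : ℝ) + (P - p) ≤ Real.exp (P - p) := by
      linarith [Real.add_one_le_exp (P - p)]
    have e2 : Real.exp P * Real.exp (p - P) = Real.exp p := by
      rw [← Real.exp_add]; congr 1; ring
    have e3 : Real.exp (-P) * Real.exp (P - p) = Real.exp (-p) := by
      rw [← Real.exp_add]; congr 1; ring
    have h1 : u + u * (p - P) ≤ α * Real.exp p := by
      calc u + u * (p - P) = (α * Real.exp P) * (1 + (p - P)) := by rw [hePu]; ring
        _ ≤ (α * Real.exp P) * Real.exp (p - P) :=
            mul_le_mul_of_nonneg_left e1 (by positivity)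
        _ = α * Real.exp p := by rw [mul_assoc, e2]
    have h2 : w + w * (P - p) ≤ β * Real.exp (-p) := by
      calc w + w * (P - p) = (β * Real.exp (-P)) * (1 + (P - p)) := by rw [hePw]; ring
        _ ≤ (β * Real.exp (-P)) * Real.exp (P - p) :=
            mul_le_mul_of_nonneg_left e1' (by positivity)
        _ = β * Real.exp (-p) := by rw [mul_assoc, e3]
    have hpJ : p * J = p * u - p * w := by rw [← huw]; ring
    have hPJ : P * J = P * u - P * w := by rw [← huw]; ring
    simp only [Sstar]
    linarith [h1, h2, hePu, hePw]
  have hSE : SE J α β = ((P * J - Sstar α β P : ℝ) : EReal) := by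
    refine le_antisymm (iSup_le fun p => ?_)
      (le_iSup (fun p : ℝ => ((p * J - Sstar α β p : ℝ) : EReal)) P)
    exact_mod_cast hmax p
  -- relating to coshLeg
  have hsexp : s = Real.exp ((Real.log α + Real.log β) / 2) := by
    rw [hs_def, Real.sqrt_eq_rpow, Real.rpow_def_of_pos (mul_pos hα hβ),
      Real.log_mul hα.ne' hβ.ne']
    congr 1; ring
  have hclog : c = (Real.log α - Real.log β) / 2 := by
    rw [hc_def, Real.log_div hα.ne' hβ.ne']
  have hsc : s * Real.exp c = α := by
    rw [hsexp, hclog, ← Real.exp_add,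
      show (Real.log α + Real.log β) / 2 + (Real.log α - Real.log β) / 2 = Real.log α by ring,
      Real.exp_log hα]
  have hscm : s * Real.exp (-c) = β := by
    rw [hsexp, hclog, ← Real.exp_add,
      show (Real.log α + Real.log β) / 2 + -((Real.log α - Real.log β) / 2) = Real.log β
        by ring,
      Real.exp_log hβ]
  have hsv : s * v = J := by rw [hv_def]; field_simp
  have hkey : ∀ p : ℝ,
      s * ((p + c) * v - 2 * (Real.cosh (p + c) - 1)) + (α + β - 2 * s - c * J)
        = p * J - Sstar α β p := by
    intro p
    have h1 : Real.exp (p + c) = Real.exp p * Real.exp c := Real.exp_add p c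
    have h2 : Real.exp (-(p + c)) = Real.exp (-p) * Real.exp (-c) := by
      rw [← Real.exp_add]; congr 1; ring
    simp only [Sstar, Real.cosh_eq]
    rw [h1, h2]
    linear_combination (p + c) * hsv - Real.exp p * hsc - Real.exp (-p) * hscm
  set V := P * J - Sstar α β P with hV_def
  set G := (V - (α + β - 2 * s - c * J)) / s with hG_def
  have hb : ∀ q : ℝ, q * v - 2 * (Real.cosh q - 1) ≤ G := by
    intro q
    have hk := hkey (q - c)
    rw [show q - c + c = q by ring] at hk
    rw [hG_def, le_div_iff₀ hs]
    linarith [hmax (q - c), hk]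
  have hGeq : (P + c) * v - 2 * (Real.cosh (P + c) - 1) = G := by
    have hk := hkey P
    rw [hG_def, eq_div_iff hs.ne']
    linarith [hk]
  have hbdd : BddAbove (Set.range fun q : ℝ => q * v - 2 * (Real.cosh q - 1)) :=
    ⟨G, by rintro x ⟨q, rfl⟩; exact hb q⟩
  have hcosh : coshLeg v = G := by
    refine le_antisymm (ciSup_le hb) ?_
    calc G = (P + c) * v - 2 * (Real.cosh (P + c) - 1) := hGeq.symm
      _ ≤ coshLeg v := le_ciSup hbdd (P + c)
  have hsqrt : (Real.sqrt α - Real.sqrt β) ^ 2 = α + β - 2 * s := by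
    have h1 : Real.sqrt α ^ 2 = α := Real.sq_sqrt hα.le
    have h2 : Real.sqrt β ^ 2 = β := Real.sq_sqrt hβ.le
    have h3 : Real.sqrt α * Real.sqrt β = s := (Real.sqrt_mul hα.le β).symm
    linear_combination h1 + h2 - 2 * h3
  have hlog2c : Real.log (α / β) = 2 * c := by rw [hc_def]; ring
  have E1 : s * coshLeg v - J / 2 * Real.log (α / β) + (Real.sqrt α - Real.sqrt β) ^ 2
      = V := by
    rw [hcosh, hsqrt, hlog2c, hG_def]
    field_simp
    ring
  have hcosh0 : (0 : ℝ) ≤ coshLeg v := by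
    rw [hcosh]
    have h0 := hb 0
    simpa [Real.cosh_zero] using h0
  refine ⟨?_, ?_, ?_⟩
  · rw [hSE]
    exact_mod_cast congrArg (fun x : ℝ => (x : EReal)) E1.symm
  · refine le_antisymm (le_iInf ?_) ?_
    · rintro ⟨⟨u', w'⟩, hu', hw', hJ'⟩
      refine iSup_le fun p => ?_
      refine EReal.coe_le_coe_iff.mpr ?_
      have l1 := entS_legendre (p := p) hα hu'
      have l2 := entS_legendre (p := -p) hβ hw'
      simp only [Sstar]
      simp only at hJ' l1 l2 ⊢
      rw [hJ']
      linarith [l1, l2]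
    · refine le_trans (iInf_le _ ⟨(u, w), hu.le, hw.le, huw.symm⟩) ?_
      rw [hSE]
      have hlw : Real.log (w / β) = -P := by
        have h1 : w / β = Real.exp (-P) := by
          rw [← hePw]; field_simp
        rw [h1, Real.log_exp]
      have hsum : entS u α + entS w β = P * J - Sstar α β P := by
        simp only [entS, Sstar, hlw, ← hP_def]
        linear_combination P * huw + hePu + hePw
      refine EReal.coe_le_coe_iff.mpr ?_
      show entS u α + entS w β ≤ V
      rw [hV_def]
      exact le_of_eq hsum
  · rw [hSE]
    refine EReal.coe_le_coe_iff.mpr ?_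
    nlinarith [mul_nonneg hs.le hcosh0, E1]
end
end

section
/- For every M > 0 and all α, β with 0 ≤ α, β ≤ M, and every J ∈ ℝ, one has S(J|α,β) ≥ M · 𝒞(J/M) − 2M. -/
open MeasureTheory Filter Set
open scoped ENNReal Topology BigOperators

noncomputable section

open FSCRN FSCRN.Network

/-- Proposition `prop:PropertiesS` (3): for `0 ≤ α, β ≤ M`,
`S(J|α,β) ≥ M·𝒞(J/M) − 2M`. -/
theorem Sfun_lower_bound (M : ℝ) (hM : 0 < M) (α β : ℝ)
    (hα : 0 ≤ α) (hαM : α ≤ M) (hβ : 0 ≤ β) (hβM : β ≤ M) (J : ℝ) :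
    ((M * coshLeg (J / M) - 2 * M : ℝ) : EReal) ≤ SE J α β := by
  classical
  by_cases htop : SE J α β = ⊤
  · rw [htop]; exact le_top
  -- SE is not ⊥ since it is a nonempty sup of reals
  have hbot : SE J α β ≠ ⊥ := by
    have h0 : (((0:ℝ) * J - Sstar α β 0 : ℝ) : EReal) ≤ SE J α β :=
      le_iSup (fun p : ℝ => (((p:ℝ) * J - Sstar α β p : ℝ) : EReal)) 0
    intro hb
    rw [hb, le_bot_iff] at h0
    exact (EReal.coe_ne_bot _) h0
  set c := (SE J α β).toReal with hc
  have hSE : SE J α β = ((c : ℝ) : EReal) := (EReal.coe_toReal htop hbot).symm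
  have hle : ∀ p : ℝ, p * J - Sstar α β p ≤ c := by
    intro p
    have h1 : (((p:ℝ) * J - Sstar α β p : ℝ) : EReal) ≤ SE J α β :=
      le_iSup (fun p : ℝ => (((p:ℝ) * J - Sstar α β p : ℝ) : EReal)) p
    rw [hSE] at h1
    exact_mod_cast h1
  have hkey : ∀ p : ℝ, Sstar α β p ≤ 2 * M * Real.cosh p := by
    intro p
    have hep : (0:ℝ) < Real.exp p := Real.exp_pos p
    have hem : (0:ℝ) < Real.exp (-p) := Real.exp_pos (-p)
    rw [Real.cosh_eq]
    unfold Sstar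
    rw [Real.exp_neg] at *
    nlinarith [Real.exp_pos p]
  have hbound : ∀ p : ℝ, p * (J / M) - 2 * (Real.cosh p - 1) ≤ (c + 2 * M) / M := by
    intro p
    rw [le_div_iff₀ hM]
    have h1 := hle p
    have h2 := hkey p
    have : p * (J / M) * M = p * J := by field_simp
    nlinarith [hle p, hkey p]
  have hcl : coshLeg (J / M) ≤ (c + 2 * M) / M := ciSup_le hbound
  have hfin : M * coshLeg (J / M) - 2 * M ≤ c := by
    have := mul_le_mul_of_nonneg_left hcl hM.le
    rw [mul_div_cancel₀ _ hM.ne'] at this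
    linarith
  rw [hSE]
  exact_mod_cast hfin
end
end

section
/- For every x ∈ 𝓔_fast, the Legendre transform of v ↦ L_eff(x,v) equals H_eff(x,·), namely L_eff(x,·)*(p) = Σ_{r∈𝓡_slow} S*_{Ψ_r^+(x),Ψ_r^-(x)}(γ_r·p) + χ_{Γ_fast^⊥}(p), where χ_{Γ_fast^⊥}(p) = 0 if p ∈ Γ_fast^⊥ and +∞ otherwise. In particular H_eff(x,p) = +∞ for p ∉ Γ_fast^⊥. Moreover, for x ∈ 𝓔_fast ∩ ℝ^I_{>0} and p ∈ Γ_fast^⊥, the supremum defining the Legendre transform is attained over the tangent space of 𝓔_fast: H_eff(x,p) = sup{ p·v − L_eff(x,v) : v ∈ T_x 𝓔_fast }. -/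
open MeasureTheory Filter Set
open scoped ENNReal Topology BigOperators

noncomputable section

open FSCRN FSCRN.Network


section AuxLemmas

open FSCRN Finset

private lemma aux_ofReal_sum_le {α : Type*} (s : Finset α) (f : α → ℝ) :
    ENNReal.ofReal (∑ i ∈ s, f i) ≤ ∑ i ∈ s, ENNReal.ofReal (f i) := by
  classical
  induction s using Finset.induction_on with
  | empty => simp
  | insert _ _ hns ih =>
    rw [Finset.sum_insert hns, Finset.sum_insert hns]
    exact le_trans (ENNReal.ofReal_add_le) (add_le_add le_rfl ih)

private lemma aux_coe_toEReal (e : ℝ≥0∞) (he : e ≠ ⊤) :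
    (e : EReal) = ((e.toReal : ℝ) : EReal) := by
  rw [← EReal.toReal_coe_ennreal]
  exact (EReal.coe_toReal (by simpa using he) (by simp)).symm

private lemma aux_sub_le (a b : ℝ) (e : ℝ≥0∞) (h : ENNReal.ofReal (a - b) ≤ e) :
    (a : EReal) - (e : EReal) ≤ (b : EReal) := by
  by_cases he : e = ⊤
  · subst he
    simp
  · rw [aux_coe_toEReal e he, ← EReal.coe_sub]
    rw [EReal.coe_le_coe_iff]
    have := (ENNReal.ofReal_le_iff_le_toReal he).1 h
    linarith

private lemma aux_le_sub (a b : ℝ) (hab : b ≤ a) (e : ℝ≥0∞)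
    (he : e ≤ ENNReal.ofReal (a - b)) : (b : EReal) ≤ (a : EReal) - (e : EReal) := by
  have h1 : (e : EReal) ≤ ((a - b : ℝ) : EReal) := by
    refine le_trans (EReal.coe_ennreal_le_coe_ennreal_iff.2 he) ?_
    rw [EReal.coe_ennreal_ofReal]
    exact le_of_eq (by rw [max_eq_left (by linarith)])
  calc (b : EReal) = ((a - (a - b) : ℝ) : EReal) := by norm_num
  _ = (a : EReal) - ((a - b : ℝ) : EReal) := EReal.coe_sub _ _
  _ ≤ (a : EReal) - (e : EReal) := EReal.sub_le_sub le_rfl h1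

private lemma aux_key (α β c q : ℝ) (hα : 0 ≤ α) (hβ : 0 ≤ β) :
    q * (α * Real.exp c - β * Real.exp (-c)) - Sstar α β q
      ≤ c * (α * Real.exp c - β * Real.exp (-c)) - Sstar α β c := by
  have e1 : Real.exp c * (1 + (q - c)) ≤ Real.exp q := by
    have h : Real.exp q = Real.exp c * Real.exp (q - c) := by
      rw [← Real.exp_add]; ring_nf
    rw [h]
    exact mul_le_mul_of_nonneg_left (by linarith [Real.add_one_le_exp (q - c)])
      (Real.exp_pos c).le
  have e2 : Real.exp (-c) * (1 + (c - q)) ≤ Real.exp (-q) := by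
    have h : Real.exp (-q) = Real.exp (-c) * Real.exp (c - q) := by
      rw [← Real.exp_add]; ring_nf
    rw [h]
    exact mul_le_mul_of_nonneg_left (by linarith [Real.add_one_le_exp (c - q)])
      (Real.exp_pos (-c)).le
  have h1 := mul_le_mul_of_nonneg_left e1 hα
  have h2 := mul_le_mul_of_nonneg_left e2 hβ
  simp only [Sstar]
  nlinarith [h1, h2]

private lemma aux_key_nonneg (α β c : ℝ) (hα : 0 ≤ α) (hβ : 0 ≤ β) :
    0 ≤ c * (α * Real.exp c - β * Real.exp (-c)) - Sstar α β c := by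
  have := aux_key α β c 0 hα hβ
  simp only [Sstar, zero_mul, Real.exp_zero, neg_zero] at this ⊢
  linarith

private lemma aux_Sfun_ge (J α β c : ℝ) :
    ENNReal.ofReal (c * J - Sstar α β c) ≤ Sfun J α β :=
  le_iSup (fun p => ENNReal.ofReal (p * J - Sstar α β p)) c

private lemma aux_Sfun_eval (α β c : ℝ) (hα : 0 ≤ α) (hβ : 0 ≤ β) :
    Sfun (α * Real.exp c - β * Real.exp (-c)) α β
      = ENNReal.ofReal (c * (α * Real.exp c - β * Real.exp (-c)) - Sstar α β c) := by
  refine le_antisymm (iSup_le fun q => ENNReal.ofReal_le_ofReal (aux_key α β c q hα hβ)) ?_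
  exact aux_Sfun_ge _ α β c

private lemma aux_Sfun_zero_le (α β : ℝ) (hα : 0 ≤ α) (hβ : 0 ≤ β) :
    Sfun 0 α β ≤ ENNReal.ofReal (α + β) := by
  refine iSup_le fun q => ENNReal.ofReal_le_ofReal ?_
  simp only [Sstar, mul_zero, zero_sub]
  nlinarith [Real.exp_pos q, Real.exp_pos (-q)]

private lemma aux_dot_smul_left {n : ℕ} (t : ℝ) (a b : Fin n → ℝ) :
    dot (t • a) b = t * dot a b := by
  simp [dot, Finset.mul_sum, mul_assoc]

private lemma aux_dot_add_left {n : ℕ} (a a' b : Fin n → ℝ) :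
    dot (a + a') b = dot a b + dot a' b := by
  simp [dot, add_mul, Finset.sum_add_distrib]

private lemma aux_dot_comm {n : ℕ} (a b : Fin n → ℝ) : dot a b = dot b a := by
  simp [dot, mul_comm]

/-- if `p` lies in the span of the rows of `Qf`, then `dot p ·` only depends on `Qf.mulVec ·`. -/
private lemma aux_dot_eq {I m : ℕ} {Qf : Matrix (Fin m) (Fin I) ℝ} {p : Fin I → ℝ}
    (hp : p ∈ Submodule.span ℝ (Set.range fun j => Qf j)) (u u' : Fin I → ℝ)
    (h : Qf.mulVec u = Qf.mulVec u') : dot p u = dot p u' := by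
  induction hp using Submodule.span_induction with
  | mem z hz =>
    obtain ⟨j, rfl⟩ := hz
    have := congrFun h j
    simpa [Matrix.mulVec, dotProduct, dot] using this
  | zero => simp [dot]
  | add a b _ _ h1 h2 => rw [aux_dot_add_left, aux_dot_add_left, h1, h2]
  | smul t a _ h1 => rw [aux_dot_smul_left, aux_dot_smul_left, h1]


private lemma aux_dot_sum_left {n : ℕ} {ι : Type*} (s : Finset ι) (f : ι → Fin n → ℝ)
    (b : Fin n → ℝ) : dot (∑ j ∈ s, f j) b = ∑ j ∈ s, dot (f j) b := by
  simp only [dot, Finset.sum_apply, Finset.sum_mul]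
  exact Finset.sum_comm


section AuxDefs

variable {I : ℕ} {R : Type*} [DecidableEq R]

private def JstarD (N : Network I R) (x p : Fin I → ℝ) : R → ℝ := fun r =>
  N.Psip r x * Real.exp (dot (N.gam r) p) - N.Psim r x * Real.exp (-dot (N.gam r) p)

private def vstarD (N : Network I R) (x p : Fin I → ℝ) : Fin I → ℝ :=
  ∑ r ∈ N.Rslow, JstarD N x p r • N.gam r

end AuxDefs

end AuxLemmas

/-- Lemma `lem:HeffRepresentation`: for `x ∈ 𝓔_fast` the Legendre
transform of `L_eff(x,·)` equals `H_eff(x,·)` (which is `+∞` off `Γ_fast^⊥`), and for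
positive `x ∈ 𝓔_fast` and `p ∈ Γ_fast^⊥` the supremum is attained over the tangent
space `T_x 𝓔_fast`. -/
theorem legendre_Leff_eq_Heff {I : ℕ} {R : Type*} [DecidableEq R] {m : ℕ}
    (N : Network I R) (hk : N.posRates)
    (Qf : Matrix (Fin m) (Fin I) ℝ) (hQf : N.IsQfast Qf)
    (x : Fin I → ℝ) (hx : x ∈ N.Efast) :
    (∀ p : Fin I → ℝ,
      (⨆ v : Fin I → ℝ, (((dot p v : ℝ) : EReal) - (N.Leff Qf x v).toEReal))
        = N.Heff x p)
    ∧ (∀ p : Fin I → ℝ, p ∉ N.GammaFastPerp → N.Heff x p = ⊤)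
    ∧ ((∀ i, 0 < x i) → ∀ p ∈ N.GammaFastPerp,
        N.Heff x p
          = ⨆ v ∈ N.tangentEfast x,
              (((dot p v : ℝ) : EReal) - (N.Leff Qf x v).toEReal)) := by
  classical
  obtain ⟨hQind, hQspan⟩ := hQf
  have hA : ∀ r ∈ N.Rslow, 0 ≤ N.Psip r x := by
    intro r hr
    have hkr := (hk r (by simp [Network.Rall, hr])).1
    exact mul_nonneg hkr.le (Finset.prod_nonneg fun i _ => pow_nonneg (hx.1 i) _)
  have hB : ∀ r ∈ N.Rslow, 0 ≤ N.Psim r x := by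
    intro r hr
    have hkr := (hk r (by simp [Network.Rall, hr])).2
    exact mul_nonneg hkr.le (Finset.prod_nonneg fun i _ => pow_nonneg (hx.1 i) _)
  have hp_span : ∀ p ∈ N.GammaFastPerp, p ∈ Submodule.span ℝ (Set.range fun j => Qf j) := by
    intro p hp
    rw [← hQspan] at hp
    exact hp
  have hdotsum : ∀ (p : Fin I → ℝ) (J : R → ℝ),
      dot p (∑ r ∈ N.Rslow, J r • N.gam r) = ∑ r ∈ N.Rslow, J r * dot (N.gam r) p := by
    intro p J
    simp only [dot, Finset.sum_apply, Pi.smul_apply, smul_eq_mul, Finset.mul_sum]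
    rw [Finset.sum_comm]
    exact Finset.sum_congr rfl fun r _ => Finset.sum_congr rfl fun i _ => by ring
  have hmapsum : ∀ J : R → ℝ,
      Qf.mulVec (∑ r ∈ N.Rslow, J r • N.gam r) = ∑ r ∈ N.Rslow, J r • Qf.mulVec (N.gam r) := by
    intro J
    simp only [← Matrix.mulVecLin_apply, map_sum, LinearMap.map_smul]
  -- Lemma A : upper bound for every velocity `v`
  have lemA : ∀ p ∈ N.GammaFastPerp, ∀ v : Fin I → ℝ,
      ((dot p v : ℝ) : EReal) - (N.Leff Qf x v).toEReal
        ≤ ((∑ r ∈ N.Rslow, Sstar (N.Psip r x) (N.Psim r x) (dot (N.gam r) p) : ℝ) : EReal) := by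
    intro p hp v
    apply aux_sub_le
    rw [Network.Leff, if_pos hx, Network.LeffQ]
    refine le_iInf ?_
    rintro ⟨J, hJ⟩
    have hfeas : Qf.mulVec v = Qf.mulVec (∑ r ∈ N.Rslow, J r • N.gam r) := by
      rw [hJ, hmapsum]
    have hdot : dot p v = ∑ r ∈ N.Rslow, J r * dot (N.gam r) p := by
      rw [aux_dot_eq (hp_span p hp) v _ hfeas, hdotsum]
    calc ENNReal.ofReal (dot p v
            - ∑ r ∈ N.Rslow, Sstar (N.Psip r x) (N.Psim r x) (dot (N.gam r) p))
        = ENNReal.ofReal (∑ r ∈ N.Rslow,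
            (dot (N.gam r) p * J r - Sstar (N.Psip r x) (N.Psim r x) (dot (N.gam r) p))) := by
          rw [hdot, ← Finset.sum_sub_distrib]
          congr 1
          exact Finset.sum_congr rfl fun r _ => by ring
      _ ≤ ∑ r ∈ N.Rslow, ENNReal.ofReal
            (dot (N.gam r) p * J r - Sstar (N.Psip r x) (N.Psim r x) (dot (N.gam r) p)) :=
          aux_ofReal_sum_le _ _
      _ ≤ ∑ r ∈ N.Rslow, Sfun (J r) (N.Psip r x) (N.Psim r x) :=
          Finset.sum_le_sum fun r _ => aux_Sfun_ge (J r) _ _ _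
  -- the optimal flux and velocity
  set Jstar : (Fin I → ℝ) → R → ℝ := JstarD N x with hJstar
  set vstar : (Fin I → ℝ) → Fin I → ℝ := vstarD N x with hvstar
  -- Lemma B : the value is attained at any `v` with `Qf v = Qf (vstar p)`
  have lemB : ∀ p ∈ N.GammaFastPerp, ∀ v : Fin I → ℝ, Qf.mulVec v = Qf.mulVec (vstar p) →
      ((∑ r ∈ N.Rslow, Sstar (N.Psip r x) (N.Psim r x) (dot (N.gam r) p) : ℝ) : EReal)
        ≤ ((dot p v : ℝ) : EReal) - (N.Leff Qf x v).toEReal := by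
    intro p hp v hv
    have hdv : dot p v = ∑ r ∈ N.Rslow, Jstar p r * dot (N.gam r) p := by
      rw [aux_dot_eq (hp_span p hp) v (vstar p) hv, hvstar]
      simp only [vstarD, hJstar]
      exact hdotsum p (JstarD N x p)
    have hsub : ∑ r ∈ N.Rslow,
        (dot (N.gam r) p * Jstar p r - Sstar (N.Psip r x) (N.Psim r x) (dot (N.gam r) p))
        = dot p v - ∑ r ∈ N.Rslow, Sstar (N.Psip r x) (N.Psim r x) (dot (N.gam r) p) := by
      rw [hdv, ← Finset.sum_sub_distrib]
      exact Finset.sum_congr rfl fun r _ => by ring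
    have hnn : ∀ r ∈ N.Rslow, 0 ≤ dot (N.gam r) p * Jstar p r
        - Sstar (N.Psip r x) (N.Psim r x) (dot (N.gam r) p) := by
      intro r hr
      have := aux_key_nonneg (N.Psip r x) (N.Psim r x) (dot (N.gam r) p) (hA r hr) (hB r hr)
      simpa only [hJstar, JstarD] using this
    have hnn2 : 0 ≤ dot p v - ∑ r ∈ N.Rslow, Sstar (N.Psip r x) (N.Psim r x) (dot (N.gam r) p) := by
      rw [← hsub]
      exact Finset.sum_nonneg hnn
    have hLle : N.Leff Qf x v
        ≤ ENNReal.ofReal (dot p v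
            - ∑ r ∈ N.Rslow, Sstar (N.Psip r x) (N.Psim r x) (dot (N.gam r) p)) := by
      rw [Network.Leff, if_pos hx, Network.LeffQ]
      refine iInf_le_of_le ⟨Jstar p, by rw [hv, hvstar]; simp only [vstarD, hJstar]; exact hmapsum (JstarD N x p)⟩
        (le_of_eq ?_)
      calc ∑ r ∈ N.Rslow, Sfun (Jstar p r) (N.Psip r x) (N.Psim r x)
          = ∑ r ∈ N.Rslow, ENNReal.ofReal
              (dot (N.gam r) p * Jstar p r
                - Sstar (N.Psip r x) (N.Psim r x) (dot (N.gam r) p)) := by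
            refine Finset.sum_congr rfl fun r hr => ?_
            simp only [hJstar, JstarD]
            exact aux_Sfun_eval _ _ _ (hA r hr) (hB r hr)
        _ = ENNReal.ofReal (∑ r ∈ N.Rslow,
              (dot (N.gam r) p * Jstar p r
                - Sstar (N.Psip r x) (N.Psim r x) (dot (N.gam r) p))) :=
            (ENNReal.ofReal_sum_of_nonneg hnn).symm
        _ = ENNReal.ofReal (dot p v
              - ∑ r ∈ N.Rslow, Sstar (N.Psip r x) (N.Psim r x) (dot (N.gam r) p)) := by
            rw [hsub]
    exact aux_le_sub _ _ (by linarith) _ hLle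
  refine ⟨?_, ?_, ?_⟩
  · -- part 1
    intro p
    by_cases hp : p ∈ N.GammaFastPerp
    · simp only [Network.Heff, if_pos hp]
      refine le_antisymm (iSup_le fun v => lemA p hp v) ?_
      exact le_iSup_of_le (vstar p) (lemB p hp (vstar p) rfl)
    · simp only [Network.Heff, if_neg hp]
      rw [EReal.eq_top_iff_forall_lt]
      intro y
      have hp2 : ¬ ∀ r ∈ N.Rfast, dot (N.gam r) p = 0 := hp
      push_neg at hp2
      obtain ⟨r0, hr0, hc0⟩ := hp2
      set K := ∑ r ∈ N.Rslow, ENNReal.ofReal (N.Psip r x + N.Psim r x) with hKdef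
      have hKtop : K ≠ ⊤ := (ENNReal.sum_lt_top.2 fun r _ => ENNReal.ofReal_lt_top).ne
      have hQγ : Qf.mulVec (N.gam r0) = 0 := by
        funext j
        have hQj : Qf j ∈ N.GammaFastPerp := by
          rw [← hQspan]
          exact Submodule.subset_span ⟨j, rfl⟩
        have h0 := hQj r0 hr0
        simpa [Matrix.mulVec, dotProduct, dot, mul_comm] using h0
      set t : ℝ := (|y| + K.toReal + 1) / dot (N.gam r0) p with htdef
      set v0 : Fin I → ℝ := t • N.gam r0 with hv0
      have hdot0 : dot p v0 = |y| + K.toReal + 1 := by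
        rw [hv0, aux_dot_comm p, aux_dot_smul_left, htdef]
        exact div_mul_cancel₀ _ hc0
      have hLv0 : N.Leff Qf x v0 ≤ K := by
        rw [Network.Leff, if_pos hx, Network.LeffQ]
        refine iInf_le_of_le ⟨fun _ => 0, ?_⟩ ?_
        · simp [hv0, Matrix.mulVec_smul, hQγ]
        · exact Finset.sum_le_sum fun r hr => aux_Sfun_zero_le _ _ (hA r hr) (hB r hr)
      refine lt_of_lt_of_le ?_
        (le_iSup (fun v => ((dot p v : ℝ) : EReal) - (N.Leff Qf x v).toEReal) v0)
      calc (y : EReal) < ((|y| + 1 : ℝ) : EReal) := by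
            rw [EReal.coe_lt_coe_iff]
            have := le_abs_self y
            linarith
        _ = ((dot p v0 - K.toReal : ℝ) : EReal) := by
            rw [hdot0]
            congr 1
            ring
        _ = ((dot p v0 : ℝ) : EReal) - (K : EReal) := by
            rw [EReal.coe_sub, aux_coe_toEReal K hKtop]
        _ ≤ ((dot p v0 : ℝ) : EReal) - (N.Leff Qf x v0).toEReal :=
            EReal.sub_le_sub le_rfl (EReal.coe_ennreal_le_coe_ennreal_iff.2 hLv0)
  · -- part 2
    intro p hp
    simp only [Network.Heff, if_neg hp]
  · -- part 3
    intro hpos p hp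
    simp only [Network.Heff, if_pos hp]
    refine le_antisymm ?_ (iSup₂_le fun v _ => lemA p hp v)
    -- surjectivity of `w ↦ Qf (diag x) w` on the row span
    set L : (Fin m → ℝ) →ₗ[ℝ] (Fin m → ℝ) :=
      (Matrix.mulVecLin Qf).comp
        ((Matrix.mulVecLin (Matrix.diagonal x)).comp (Matrix.mulVecLin Qf.transpose)) with hLdef
    have hdiag : ∀ u : Fin I → ℝ, (Matrix.diagonal x).mulVec u = fun i => x i * u i := by
      intro u
      funext i
      simp [Matrix.mulVec, diagonal_dotProduct]
    have hQt : ∀ c : Fin m → ℝ, Qf.transpose.mulVec c = ∑ j, c j • Qf j := by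
      intro c
      funext i
      simp [Matrix.mulVec, dotProduct, Matrix.transpose_apply, Finset.sum_apply,
        mul_comm]
    have hLc : ∀ c : Fin m → ℝ,
        L c = Qf.mulVec (fun i => x i * (∑ j, c j • Qf j) i) := by
      intro c
      simp only [hLdef, LinearMap.comp_apply, Matrix.mulVecLin_apply, hQt, hdiag]
    have hLinj : Function.Injective L := by
      rw [injective_iff_map_eq_zero]
      intro c hc
      set w : Fin I → ℝ := ∑ j, c j • Qf j with hwdef
      have hdw : dot w (fun i => x i * w i) = ∑ j, c j * (L c) j := by
        rw [hwdef, aux_dot_sum_left]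
        refine Finset.sum_congr rfl fun j _ => ?_
        rw [aux_dot_smul_left, hLc]
        congr 1
      have hsum0 : ∑ i, x i * w i ^ 2 = 0 := by
        have h1 : dot w (fun i => x i * w i) = 0 := by
          rw [hdw, hc]
          simp
        rw [← h1]
        simp only [dot]
        exact Finset.sum_congr rfl fun i _ => by ring
      have hw0 : ∀ i, w i = 0 := by
        intro i
        have hz := (Finset.sum_eq_zero_iff_of_nonneg
          (fun i _ => mul_nonneg (hpos i).le (sq_nonneg (w i)))).1 hsum0 i (Finset.mem_univ i)
        rcases mul_eq_zero.1 hz with h | h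
        · exact absurd h (ne_of_gt (hpos i))
        · exact (pow_eq_zero_iff (by norm_num)).1 h
      have hc0 : ∀ j, c j = 0 := by
        refine Fintype.linearIndependent_iff.1 hQind c ?_
        rw [← hwdef]
        exact funext hw0
      exact funext hc0
    obtain ⟨c, hc⟩ := LinearMap.injective_iff_surjective.1 hLinj (Qf.mulVec (vstar p))
    set w : Fin I → ℝ := ∑ j, c j • Qf j with hwdef
    have hwperp : w ∈ N.GammaFastPerp := by
      rw [← hQspan]
      exact Submodule.sum_mem _ fun j _ =>
        Submodule.smul_mem _ _ (Submodule.subset_span ⟨j, rfl⟩)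
    set vt : Fin I → ℝ := fun i => x i * w i with hvtdef
    have hvt_mem : vt ∈ N.tangentEfast x := ⟨w, hwperp, rfl⟩
    have hQvt : Qf.mulVec vt = Qf.mulVec (vstar p) := by
      rw [← hc, hLc c]
    exact le_iSup₂_of_le vt hvt_mem (lemB p hp vt hQvt)
end
end

section
/- Let x ∈ ℝ^I_{≥0} be arbitrary, and let Ψ^±(x) = k^± x^{γ^±} (with multi-index notation x^{γ} = ∏_i x_i^{γ_i}) for γ^± ∈ ℕ^I, γ = γ^- − γ^+, and k^± > 0. Let x*_s ∈ ℝ^I_{>0}. Then for all J ∈ ℝ the pointwise estimate J · (γ · log(x/x*_s)) ≤ S(J|Ψ^+(x),Ψ^-(x)) + k^+ ( x^{γ^-} (x*_s)^{−γ} − x^{γ^+} ) + k^- ( x^{γ^+} (x*_s)^{γ} − x^{γ^-} ) holds, where the right-hand side is well defined up to the boundary x ∈ ∂ℝ^I_{≥0}. -/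
open MeasureTheory Filter Set
open scoped ENNReal Topology BigOperators

noncomputable section

open FSCRN FSCRN.Network

namespace FSCRNAux

lemma coe_sum {ι : Type*} (s : Finset ι) (f : ι → ℝ) :
    ((∑ i ∈ s, f i : ℝ) : EReal) = ∑ i ∈ s, ((f i : ℝ) : EReal) := by
  classical
  induction s using Finset.induction with
  | empty => simp
  | @insert _ _ h ih => rw [Finset.sum_insert h, Finset.sum_insert h, EReal.coe_add, ih]

lemma sum_ne_bot {ι : Type*} (s : Finset ι) (f : ι → EReal)
    (h : ∀ i ∈ s, f i ≠ ⊥) : ∑ i ∈ s, f i ≠ ⊥ := by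
  classical
  induction s using Finset.induction with
  | empty => simp
  | @insert _ _ hx ih =>
      rw [Finset.sum_insert hx, Ne, EReal.add_eq_bot_iff]
      push_neg
      exact ⟨h _ (Finset.mem_insert_self _ _),
        ih fun i hi => h i (Finset.mem_insert_of_mem hi)⟩

lemma SE_ge (J α β p : ℝ) : ((p * J - Sstar α β p : ℝ) : EReal) ≤ SE J α β :=
  le_iSup (fun p => ((p * J - Sstar α β p : ℝ) : EReal)) p

lemma SE_eq_top_pos {J β : ℝ} (hJ : 0 < J) (hβ : 0 ≤ β) : SE J 0 β = ⊤ := by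
  rw [SE, iSup_eq_top]
  intro b hb
  obtain ⟨M, hM, -⟩ := EReal.exists_between_coe_real hb
  set p := max 0 ((M + 1) / J) with hp
  refine ⟨p, lt_of_lt_of_le hM ?_⟩
  rw [EReal.coe_le_coe_iff]
  have hp0 : 0 ≤ p := le_max_left _ _
  have h1 : M + 1 ≤ p * J := by
    rw [← div_le_iff₀ hJ]; exact le_max_right _ _
  have h2 : Sstar 0 β p ≤ 0 := by
    have hle : Real.exp (-p) ≤ 1 := Real.exp_le_one_iff.mpr (neg_nonpos.mpr hp0)
    simp only [Sstar]
    nlinarith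
  linarith

lemma SE_eq_top_neg {J α : ℝ} (hJ : J < 0) (hα : 0 ≤ α) : SE J α 0 = ⊤ := by
  rw [SE, iSup_eq_top]
  intro b hb
  obtain ⟨M, hM, -⟩ := EReal.exists_between_coe_real hb
  set p := min 0 ((M + 1) / J) with hp
  refine ⟨p, lt_of_lt_of_le hM ?_⟩
  rw [EReal.coe_le_coe_iff]
  have hp0 : p ≤ 0 := min_le_left _ _
  have h1 : M + 1 ≤ p * J := by
    have := min_le_right 0 ((M + 1) / J)
    rwa [le_div_iff_of_neg hJ] at this
  have h2 : Sstar α 0 p ≤ 0 := by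
    have hle : Real.exp p ≤ 1 := Real.exp_le_one_iff.mpr hp0
    simp only [Sstar]
    nlinarith
  linarith

lemma idx_pow (a b : ℕ) (x xs : ℝ) (hxs : 0 < xs) (hx : 0 ≤ x)
    (h : x = 0 → a = 0 ∧ b = 0) :
    x ^ a * Real.exp (((b : ℝ) - (a : ℝ)) * Real.log (x / xs))
      = x ^ b * xs ^ ((a : ℤ) - (b : ℤ)) := by
  rcases eq_or_lt_of_le hx with h0 | hxpos
  · obtain ⟨ha, hb⟩ := h h0.symm
    subst ha; subst hb; simp
  · have ht : 0 < x / xs := div_pos hxpos hxs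
    have hx0 : x ≠ 0 := ne_of_gt hxpos
    have hxs0 : xs ≠ 0 := ne_of_gt hxs
    rw [mul_comm ((b : ℝ) - (a : ℝ)) (Real.log (x / xs)), ← Real.rpow_def_of_pos ht,
      Real.rpow_sub ht,
      Real.rpow_natCast, Real.rpow_natCast, zpow_sub₀ hxs0, zpow_natCast, zpow_natCast,
      div_pow, div_pow]
    field_simp

end FSCRNAux

open FSCRNAux

/-- Lemma `lem:EstimateCompactness`: for arbitrary `x ∈ ℝ^I_{≥0}` and
the mass-action intensities `Ψ^±(x) = k^± x^{γ^±}` of a single reaction, the pointwise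
estimate
`J (γ · log(x/x*_s)) ≤ S(J|Ψ⁺(x),Ψ⁻(x)) + k⁺(x^{γ⁻}(x*_s)^{−γ} − x^{γ⁺}) + k⁻(x^{γ⁺}(x*_s)^{γ} − x^{γ⁻})`
holds, in the extended reals (so that the left-hand side is defined up to the boundary,
with `log 0 = −∞`). -/
theorem flux_entropy_estimate {I : ℕ} (γp γm : Fin I → ℕ) (kp km : ℝ)
    (hkp : 0 < kp) (hkm : 0 < km)
    (xs : Fin I → ℝ) (hxs : ∀ i, 0 < xs i)
    (x : Fin I → ℝ) (hx : ∀ i, 0 ≤ x i) (J : ℝ) :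
    ((J : ℝ) : EReal) * ∑ i, ((((γm i : ℝ) - (γp i : ℝ)) : ℝ) : EReal) * elog (x i / xs i)
      ≤ SE J (kp * ∏ i, x i ^ γp i) (km * ∏ i, x i ^ γm i)
          + (((kp * ((∏ i, x i ^ γm i) * ∏ i, xs i ^ ((γp i : ℤ) - (γm i : ℤ)))
                - kp * ∏ i, x i ^ γp i)
              + (km * ((∏ i, x i ^ γp i) * ∏ i, xs i ^ ((γm i : ℤ) - (γp i : ℤ)))
                - km * ∏ i, x i ^ γm i) : ℝ) : EReal) := by
  classical
  set A := ∏ i, x i ^ γp i with hA_def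
  set B := ∏ i, x i ^ γm i with hB_def
  set Cp := ∏ i, xs i ^ ((γp i : ℤ) - (γm i : ℤ)) with hCp_def
  set Cm := ∏ i, xs i ^ ((γm i : ℤ) - (γp i : ℤ)) with hCm_def
  have hA_nonneg : 0 ≤ A := Finset.prod_nonneg fun i _ => pow_nonneg (hx i) _
  have hB_nonneg : 0 ≤ B := Finset.prod_nonneg fun i _ => pow_nonneg (hx i) _
  have hCp_pos : 0 < Cp := Finset.prod_pos fun i _ => zpow_pos (hxs i) _
  have hCm_pos : 0 < Cm := Finset.prod_pos fun i _ => zpow_pos (hxs i) _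
  set rem : ℝ := (kp * (B * Cp) - kp * A) + (km * (A * Cm) - km * B) with hrem_def
  have key : ∀ p : ℝ,
      Sstar (kp * A) (km * B) p ≤ rem →
      ((J * p : ℝ) : EReal) ≤ SE J (kp * A) (km * B) + ((rem : ℝ) : EReal) := by
    intro p hp
    have h1 := SE_ge J (kp * A) (km * B) p
    calc ((J * p : ℝ) : EReal)
        ≤ ((p * J - Sstar (kp * A) (km * B) p + rem : ℝ) : EReal) := by
          rw [EReal.coe_le_coe_iff]; linarith
      _ = ((p * J - Sstar (kp * A) (km * B) p : ℝ) : EReal) + ((rem : ℝ) : EReal) := by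
          rw [← EReal.coe_add]
      _ ≤ SE J (kp * A) (km * B) + ((rem : ℝ) : EReal) := add_le_add_left h1 _
  by_cases hAB : 0 < A ∧ 0 < B
  · -- interior case
    obtain ⟨hA, hB⟩ := hAB
    have hzero : ∀ i, x i = 0 → γp i = 0 ∧ γm i = 0 := by
      intro i hi
      constructor
      · by_contra hne
        exact absurd (Finset.prod_eq_zero (Finset.mem_univ i)
          (by rw [hi, zero_pow hne]) : A = 0) (ne_of_gt hA)
      · by_contra hne
        exact absurd (Finset.prod_eq_zero (Finset.mem_univ i)
          (by rw [hi, zero_pow hne]) : B = 0) (ne_of_gt hB)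
    set p := ∑ i, ((γm i : ℝ) - (γp i : ℝ)) * Real.log (x i / xs i) with hp_def
    have hLHS : (∑ i, ((((γm i : ℝ) - (γp i : ℝ)) : ℝ) : EReal) * elog (x i / xs i))
        = ((p : ℝ) : EReal) := by
      rw [hp_def, coe_sum]
      refine Finset.sum_congr rfl fun i _ => ?_
      rcases eq_or_lt_of_le (hx i) with h0 | hpos
      · obtain ⟨h1, h2⟩ := hzero i h0.symm
        simp [h1, h2]
      · have hne : x i / xs i ≠ 0 := ne_of_gt (div_pos hpos (hxs i))
        rw [elog, if_neg hne, ← EReal.coe_mul]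
    have hexp1 : A * Real.exp p = B * Cp := by
      rw [hp_def, Real.exp_sum, hA_def, hB_def, hCp_def, ← Finset.prod_mul_distrib,
        ← Finset.prod_mul_distrib]
      exact Finset.prod_congr rfl fun i _ =>
        idx_pow (γp i) (γm i) (x i) (xs i) (hxs i) (hx i) (hzero i)
    have hnegp : -p = ∑ i, ((γp i : ℝ) - (γm i : ℝ)) * Real.log (x i / xs i) := by
      rw [hp_def, ← Finset.sum_neg_distrib]
      exact Finset.sum_congr rfl fun i _ => by ring
    have hexp2 : B * Real.exp (-p) = A * Cm := by
      rw [hnegp, Real.exp_sum, hA_def, hB_def, hCm_def, ← Finset.prod_mul_distrib,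
        ← Finset.prod_mul_distrib]
      exact Finset.prod_congr rfl fun i _ =>
        idx_pow (γm i) (γp i) (x i) (xs i) (hxs i) (hx i)
          (fun h => ⟨(hzero i h).2, (hzero i h).1⟩)
    have hSstar : Sstar (kp * A) (km * B) p = rem := by
      have heq : Sstar (kp * A) (km * B) p
          = kp * (A * Real.exp p) - kp * A + (km * (B * Real.exp (-p)) - km * B) := by
        rw [Sstar]; ring
      rw [heq, hexp1, hexp2, hrem_def]
    rw [hLHS, ← EReal.coe_mul]
    exact key p (le_of_eq hSstar)
  · -- boundary case: A = 0 or B = 0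
    have hbd : A = 0 ∨ B = 0 := by
      by_contra hc
      push_neg at hc
      exact hAB ⟨lt_of_le_of_ne hA_nonneg (Ne.symm hc.1),
        lt_of_le_of_ne hB_nonneg (Ne.symm hc.2)⟩
    by_cases hJ0 : J = 0
    · -- J = 0 : LHS is 0
      subst hJ0
      rw [EReal.coe_zero, zero_mul]
      have hfin : ∃ p : ℝ, Sstar (kp * A) (km * B) p ≤ rem := by
        rcases eq_or_lt_of_le hA_nonneg with hA0 | hApos
        · rcases eq_or_lt_of_le hB_nonneg with hB0 | hBpos
          · refine ⟨0, ?_⟩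
            simp [Sstar, hrem_def, ← hA0, ← hB0]
          · have hC : 0 < kp * (B * Cp) := by positivity
            have hβ : 0 < km * B := by positivity
            refine ⟨Real.log (km * B / (kp * (B * Cp))), le_of_eq ?_⟩
            rw [Sstar, ← hA0, mul_zero, zero_mul, zero_add, ← Real.log_inv,
              Real.exp_log (by positivity), hrem_def, ← hA0]
            field_simp
            ring
        · have hB0 : B = 0 := hbd.resolve_left (ne_of_gt hApos)
          have hD : 0 < km * (A * Cm) := by positivity
          have hα : 0 < kp * A := by positivity
          refine ⟨Real.log (km * (A * Cm) / (kp * A)), le_of_eq ?_⟩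
          rw [Sstar, hB0, mul_zero, zero_mul, add_zero,
            Real.exp_log (by positivity), hrem_def, hB0]
          field_simp
          ring
      obtain ⟨p, hp⟩ := hfin
      have h0p : ((0 : ℝ) : EReal) ≤ ((0 * p : ℝ) : EReal) := by norm_num
      exact le_trans h0p (by simpa using key p hp)
    · -- J ≠ 0
      rcases hbd with hA0 | hB0
      · rcases lt_or_gt_of_ne hJ0 with hneg | hpos
        · -- J < 0, A = 0
          rcases eq_or_lt_of_le hB_nonneg with hB0 | hBpos
          · rw [hA0, mul_zero, ← hB0, mul_zero, SE_eq_top_neg hneg le_rfl,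
              EReal.top_add_coe]
            exact le_top
          · -- B > 0 : LHS = ⊥ since the sum is ⊤ and J < 0
            obtain ⟨i₀, -, hi₀⟩ := Finset.prod_eq_zero_iff.mp hA0
            obtain ⟨hx0, hγ⟩ := pow_eq_zero_iff'.mp hi₀
            have hm0 : ∀ i, x i = 0 → γm i = 0 := by
              intro i hi
              by_contra hne
              exact absurd (Finset.prod_eq_zero (Finset.mem_univ i)
                (by rw [hi, zero_pow hne]) : B = 0) (ne_of_gt hBpos)
            have hterm : ((((γm i₀ : ℝ) - (γp i₀ : ℝ)) : ℝ) : EReal) * elog (x i₀ / xs i₀)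
                = ⊤ := by
              have hc : ((γm i₀ : ℝ) - (γp i₀ : ℝ)) < 0 := by
                have h1 : (0 : ℝ) < (γp i₀ : ℝ) := by
                  exact_mod_cast Nat.pos_of_ne_zero hγ
                rw [hm0 i₀ hx0]; push_cast; linarith
              rw [show x i₀ / xs i₀ = 0 by rw [hx0, zero_div],
                show elog 0 = ⊥ by simp [elog]]
              exact EReal.coe_mul_bot_of_neg hc
            have hsum : (∑ i, ((((γm i : ℝ) - (γp i : ℝ)) : ℝ) : EReal) * elog (x i / xs i))
                = ⊤ := by
              rw [← Finset.add_sum_erase Finset.univ _ (Finset.mem_univ i₀), hterm]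
              apply EReal.top_add_of_ne_bot
              apply sum_ne_bot
              intro i hi
              rcases eq_or_lt_of_le (hx i) with h0 | hpos'
              · have hmi : γm i = 0 := hm0 i h0.symm
                rcases Nat.eq_zero_or_pos (γp i) with hpi | hpi
                · simp [hmi, hpi]
                · have hc : ((γm i : ℝ) - (γp i : ℝ)) < 0 := by
                    have h1 : (0 : ℝ) < (γp i : ℝ) := by exact_mod_cast hpi
                    rw [hmi]; push_cast; linarith
                  rw [show x i / xs i = 0 by rw [← h0, zero_div],
                    show elog 0 = ⊥ by simp [elog], EReal.coe_mul_bot_of_neg hc]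
                  exact top_ne_bot
              · have hne : x i / xs i ≠ 0 := ne_of_gt (div_pos hpos' (hxs i))
                rw [elog, if_neg hne, ← EReal.coe_mul]
                exact EReal.coe_ne_bot _
            rw [hsum, EReal.coe_mul_top_of_neg hneg]
            exact bot_le
        · -- J > 0, A = 0 : SE = ⊤
          rw [hA0, mul_zero, SE_eq_top_pos hpos (by positivity), EReal.top_add_coe]
          exact le_top
      · rcases lt_or_gt_of_ne hJ0 with hneg | hpos
        · -- J < 0, B = 0 : SE = ⊤
          rw [hB0, mul_zero, SE_eq_top_neg hneg (by positivity), EReal.top_add_coe]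
          exact le_top
        · -- J > 0, B = 0
          rcases eq_or_lt_of_le hA_nonneg with hA0 | hApos
          · rw [← hA0, mul_zero, hB0, mul_zero, SE_eq_top_pos hpos le_rfl,
              EReal.top_add_coe]
            exact le_top
          · -- A > 0 : LHS = ⊥
            obtain ⟨i₀, -, hi₀⟩ := Finset.prod_eq_zero_iff.mp hB0
            obtain ⟨hx0, hγ⟩ := pow_eq_zero_iff'.mp hi₀
            have hp0 : γp i₀ = 0 := by
              by_contra hne
              exact absurd (Finset.prod_eq_zero (Finset.mem_univ i₀)
                (by rw [hx0, zero_pow hne]) : A = 0) (ne_of_gt hApos)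
            have hterm : ((((γm i₀ : ℝ) - (γp i₀ : ℝ)) : ℝ) : EReal) * elog (x i₀ / xs i₀)
                = ⊥ := by
              have hc : (0 : ℝ) < ((γm i₀ : ℝ) - (γp i₀ : ℝ)) := by
                rw [hp0]
                simp only [Nat.cast_zero, sub_zero]
                exact_mod_cast Nat.pos_of_ne_zero hγ
              rw [show x i₀ / xs i₀ = 0 by rw [hx0, zero_div],
                show elog 0 = ⊥ by simp [elog]]
              exact EReal.coe_mul_bot_of_pos hc
            have hsum : (∑ i, ((((γm i : ℝ) - (γp i : ℝ)) : ℝ) : EReal) * elog (x i / xs i))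
                = ⊥ := by
              rw [← Finset.add_sum_erase Finset.univ _ (Finset.mem_univ i₀), hterm,
                EReal.bot_add]
            rw [hsum, EReal.coe_mul_bot_of_pos hpos]
            exact bot_le
end
end

section
/- Let u^ε be a viscosity solution of the state-constrained fast-slow HJE (HJE_ε) with well-prepared initial data, and suppose the uniform bound (1/ε) | Σ_{r∈𝓡_fast} Ψ_r^+(x)(e^{γ_r·∇u^ε} − 1) + Ψ_r^-(x)(e^{−γ_r·∇u^ε} − 1) | ≤ C holds uniformly in ε. Then for every fast reaction r ∈ 𝓡_fast, γ_r · ∇u^ε → 0 as ε → 0 uniformly in t ∈ [0,T] and x ∈ 𝓜_S = Ω̄ ∩ 𝓔_fast (at points where ∇u^ε exists); more precisely, on 𝓜_S one has 0 ≤ 2Ψ_r^+(x)(cosh(γ_r·∇u^ε) − 1) ≤ Cε. -/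
open MeasureTheory Filter Set
open scoped ENNReal Topology BigOperators

noncomputable section

open FSCRN FSCRN.Network


theorem FSCRN.sq_le_two_cosh_sub_one (p : ℝ) : p^2 ≤ 2 * (Real.cosh p - 1) := by
  have h : Real.cosh p = 2 * Real.sinh (p/2)^2 + 1 := by
    have h1 := Real.cosh_two_mul (p/2)
    have h2 := Real.cosh_sq (p/2)
    rw [show p = 2*(p/2) by ring, h1, h2]; ring
  have h3 : |p/2| ≤ |Real.sinh (p/2)| := by
    rw [Real.abs_sinh]
    exact Real.self_le_sinh_iff.mpr (abs_nonneg _)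
  nlinarith [sq_abs (p/2), sq_abs (Real.sinh (p/2)),
    pow_le_pow_left₀ (abs_nonneg (p/2)) h3 2]

/-- Remark after Proposition `prop_Lip`: under the uniform bound on
the fast part of the Hamiltonian, `γ_r · ∇u^ε → 0` uniformly on the slow manifold
`𝓜_S = Ω̄ ∩ 𝓔_fast` (at points of differentiability); more precisely
`0 ≤ 2Ψ_r⁺(x)(cosh(γ_r·∇u^ε) − 1) ≤ Cε` there. -/
theorem fast_gradient_vanishes {I : ℕ} {R : Type*} [DecidableEq R]
    (N : Network I R) (hk : N.posRates)
    (Ω : Set (Fin I → ℝ)) (hΩo : IsOpen Ω) (hΩb : Bornology.IsBounded Ω)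
    (hΩpos : closure Ω ⊆ {x | ∀ i, 0 < x i})
    (T : ℝ) (hT : 0 < T) (C : ℝ) (hC : 0 < C)
    (u0 : ℝ → (Fin I → ℝ) → ℝ) (u0star : (Fin I → ℝ) → ℝ)
    (hwp : N.WellPrepared Ω C u0 u0star)
    (u : ℝ → (Fin I → ℝ) × ℝ → ℝ)
    (hsol : ∀ ε ∈ Set.Ioi (0:ℝ),
      BUCOn (u ε) (closure Ω ×ˢ Set.Icc 0 T) ∧
      IsViscSubsol (N.Heps ε) (Ω ×ˢ Set.Ioo 0 T) (Ω ×ˢ Set.Ioo 0 T) (u ε) ∧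
      IsViscSupersol (N.Heps ε) (closure Ω ×ˢ Set.Ioo 0 T)
        (closure Ω ×ˢ Set.Ioo 0 T) (u ε) ∧
      ∀ x ∈ closure Ω, u ε (x, 0) = u0 ε x)
    (hunif : ∀ ε ∈ Set.Ioi (0:ℝ), ∀ z ∈ Ω ×ˢ Set.Ioo 0 T,
      DifferentiableAt ℝ (u ε) z →
        ε⁻¹ * |∑ r ∈ N.Rfast,
            (N.Psip r z.1 * (Real.exp (dot (N.gam r) (spaceGrad (u ε) z)) - 1)
              + N.Psim r z.1 * (Real.exp (-(dot (N.gam r) (spaceGrad (u ε) z))) - 1))|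
          ≤ C) :
    -- the quantitative bound on the slow manifold
    (∀ ε ∈ Set.Ioi (0:ℝ), ∀ r ∈ N.Rfast, ∀ z ∈ (Ω ∩ N.Efast) ×ˢ Set.Ioo 0 T,
      DifferentiableAt ℝ (u ε) z →
        0 ≤ 2 * N.Psip r z.1 * (Real.cosh (dot (N.gam r) (spaceGrad (u ε) z)) - 1)
        ∧ 2 * N.Psip r z.1 * (Real.cosh (dot (N.gam r) (spaceGrad (u ε) z)) - 1)
            ≤ C * ε)
    ∧
    -- uniform convergence `γ_r · ∇u^ε → 0` on the slow manifold
    (∀ r ∈ N.Rfast, ∀ δ : ℝ, 0 < δ → ∃ ε₀ : ℝ, 0 < ε₀ ∧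
      ∀ ε : ℝ, 0 < ε → ε < ε₀ → ∀ z ∈ (Ω ∩ N.Efast) ×ˢ Set.Ioo 0 T,
        DifferentiableAt ℝ (u ε) z →
          |dot (N.gam r) (spaceGrad (u ε) z)| ≤ δ) := by
  classical
  -- the quantitative bound (first conjunct), proved as a `have` to reuse it
  have part1 : ∀ ε ∈ Set.Ioi (0:ℝ), ∀ r ∈ N.Rfast, ∀ z ∈ (Ω ∩ N.Efast) ×ˢ Set.Ioo 0 T,
      DifferentiableAt ℝ (u ε) z →
        0 ≤ 2 * N.Psip r z.1 * (Real.cosh (dot (N.gam r) (spaceGrad (u ε) z)) - 1)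
        ∧ 2 * N.Psip r z.1 * (Real.cosh (dot (N.gam r) (spaceGrad (u ε) z)) - 1)
            ≤ C * ε := by
    intro ε hε r hr z hz hdiff
    have hε0 : (0:ℝ) < ε := hε
    obtain ⟨⟨hzΩ, hzE⟩, hzt⟩ := hz
    -- each fast summand equals `2Ψ⁺(cosh−1)` and is nonnegative
    have hterm : ∀ r' ∈ N.Rfast,
        N.Psip r' z.1 * (Real.exp (dot (N.gam r') (spaceGrad (u ε) z)) - 1)
          + N.Psim r' z.1 * (Real.exp (-(dot (N.gam r') (spaceGrad (u ε) z))) - 1)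
        = 2 * N.Psip r' z.1 * (Real.cosh (dot (N.gam r') (spaceGrad (u ε) z)) - 1) := by
      intro r' hr'
      have hEq : N.Psip r' z.1 = N.Psim r' z.1 := hzE.2 r' hr'
      rw [Real.cosh_eq, ← hEq]; ring
    have hPsipos : ∀ r' ∈ N.Rfast, 0 ≤ N.Psip r' z.1 := by
      intro r' hr'
      have hk' : 0 < N.kp r' := (hk r' (Finset.mem_union.2 (Or.inr hr'))).1
      have hx : ∀ i, 0 < z.1 i := hΩpos (subset_closure hzΩ)
      have : 0 < ∏ i, z.1 i ^ N.γp r' i :=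
        Finset.prod_pos fun i _ => pow_pos (hx i) _
      exact le_of_lt (mul_pos hk' this)
    have htnn : ∀ r' ∈ N.Rfast,
        0 ≤ 2 * N.Psip r' z.1 * (Real.cosh (dot (N.gam r') (spaceGrad (u ε) z)) - 1) := by
      intro r' hr'
      have h1 : (1:ℝ) ≤ Real.cosh (dot (N.gam r') (spaceGrad (u ε) z)) := Real.one_le_cosh _
      have := hPsipos r' hr'
      nlinarith
    -- the uniform bound on the full fast sum
    have hsum := hunif ε hε z ⟨hzΩ, hzt⟩ hdiff
    have habs : |∑ r' ∈ N.Rfast,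
        (N.Psip r' z.1 * (Real.exp (dot (N.gam r') (spaceGrad (u ε) z)) - 1)
          + N.Psim r' z.1 * (Real.exp (-(dot (N.gam r') (spaceGrad (u ε) z))) - 1))|
        ≤ C * ε := by
      rw [inv_mul_le_iff₀ hε0] at hsum
      linarith [hsum]
    have hsum_eq : (∑ r' ∈ N.Rfast,
        (N.Psip r' z.1 * (Real.exp (dot (N.gam r') (spaceGrad (u ε) z)) - 1)
          + N.Psim r' z.1 * (Real.exp (-(dot (N.gam r') (spaceGrad (u ε) z))) - 1)))
        = ∑ r' ∈ N.Rfast,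
          2 * N.Psip r' z.1 * (Real.cosh (dot (N.gam r') (spaceGrad (u ε) z)) - 1) :=
      Finset.sum_congr rfl hterm
    have hsnn : 0 ≤ ∑ r' ∈ N.Rfast,
        2 * N.Psip r' z.1 * (Real.cosh (dot (N.gam r') (spaceGrad (u ε) z)) - 1) :=
      Finset.sum_nonneg htnn
    have hle : 2 * N.Psip r z.1 * (Real.cosh (dot (N.gam r) (spaceGrad (u ε) z)) - 1)
        ≤ ∑ r' ∈ N.Rfast,
          2 * N.Psip r' z.1 * (Real.cosh (dot (N.gam r') (spaceGrad (u ε) z)) - 1) :=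
      Finset.single_le_sum htnn hr
    rw [hsum_eq] at habs
    rw [abs_of_nonneg hsnn] at habs
    exact ⟨htnn r hr, hle.trans habs⟩
  refine ⟨part1, ?_⟩
  intro r hr δ hδ
  rcases Set.eq_empty_or_nonempty (closure Ω) with hΩe | hΩne
  · refine ⟨1, one_pos, fun ε hε hε' z hz hdiff => ?_⟩
    exact absurd (subset_closure hz.1.1) (by simp [hΩe])
  -- uniform positive lower bound for `Ψ⁺_r` on the compact set `closure Ω`
  have hcpt : IsCompact (closure Ω) := Metric.isCompact_of_isClosed_isBounded isClosed_closure hΩb.closure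
  have hcont : ContinuousOn (fun x : Fin I → ℝ => N.Psip r x) (closure Ω) := by
    apply Continuous.continuousOn
    unfold Network.Psip
    exact continuous_const.mul (continuous_finset_prod _ fun i _ =>
      (continuous_apply i).pow _)
  obtain ⟨x₀, hx₀, hx₀min⟩ := hcpt.exists_isMinOn hΩne hcont
  set c₀ : ℝ := N.Psip r x₀ with hc₀def
  have hc₀pos : 0 < c₀ := by
    have hk' : 0 < N.kp r := (hk r (Finset.mem_union.2 (Or.inr hr))).1
    have hx : ∀ i, 0 < x₀ i := hΩpos hx₀
    exact mul_pos hk' (Finset.prod_pos fun i _ => pow_pos (hx i) _)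
  refine ⟨c₀ * δ^2 / C, by positivity, fun ε hε hε' z hz hdiff => ?_⟩
  obtain ⟨h0, h1⟩ := part1 ε hε r hr z hz hdiff
  set p : ℝ := dot (N.gam r) (spaceGrad (u ε) z) with hp
  have hc₀le : c₀ ≤ N.Psip r z.1 := hx₀min (subset_closure hz.1.1)
  have hcosh : p^2 ≤ 2 * (Real.cosh p - 1) := FSCRN.sq_le_two_cosh_sub_one p
  have hcosh1 : (0:ℝ) ≤ Real.cosh p - 1 := by linarith [Real.one_le_cosh p]
  -- combine: c₀ p² ≤ 2 Ψ⁺ (cosh p − 1) ≤ C ε < c₀ δ²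
  have key : c₀ * p^2 ≤ C * ε := by nlinarith
  have hCe : C * ε < c₀ * δ^2 := by
    have := (lt_div_iff₀ hC).mp hε'
    linarith
  have hp2 : p^2 < δ^2 := by
    have := key.trans_lt hCe
    nlinarith
  nlinarith [sq_abs p, abs_nonneg p]
end
end
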